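/- Let L be a p-representable semimatroid on N = {1,2,3,4} containing at least two couples, and suppose there is a fixed subset N' ⊆ {1,2,3,4} such that {i} ∪ {j} ∪ K = N' for every couple (i,j|K) ∈ L. Then L is an Ingleton semimatroid: there exists f ∈ Γ_4 satisfying all six Ingleton inequalities Ingleton_{ij}(f) ≥ 0 such that L = { (i,j|K) : f_{iK} + f_{jK} − f_K − f_{ijK} = 0 }. -/
import Mathlib


open Finset

/-- Marginal of the joint pmf `p` on the coordinates in `A`. -/
noncomputable def marg {N : ℕ} {M : Fin N → ℕ} (p : (∀ i, Fin (M i)) → ℝ)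
    (A : Finset (Fin N)) : (∀ i : {j // j ∈ A}, Fin (M i.1)) → ℝ :=
  fun y => ∑ x ∈ Finset.univ.filter
    (fun x : ∀ i, Fin (M i) => ∀ i : {j // j ∈ A}, x i.1 = y i), p x

/-- Shannon entropy in bits of the marginal of `p` on the coordinates in `A`. -/
noncomputable def entH {N : ℕ} {M : Fin N → ℕ} (p : (∀ i, Fin (M i)) → ℝ)
    (A : Finset (Fin N)) : ℝ :=
  -∑ y : ∀ i : {j // j ∈ A}, Fin (M i.1), marg p A y * Real.logb 2 (marg p A y)

/-- Conditional mutual information `I(X_i;X_j|X_K)` in bits, via entropies. -/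
noncomputable def condMI {N : ℕ} {M : Fin N → ℕ} (p : (∀ i, Fin (M i)) → ℝ)
    (i j : Fin N) (K : Finset (Fin N)) : ℝ :=
  entH p (insert i K) + entH p (insert j K) - entH p K - entH p (insert i (insert j K))

/-- The Shannon outer bound `Γ_N`. -/
def Gamma (N : ℕ) : Set (Finset (Fin N) → ℝ) :=
  {h | h ∅ = 0 ∧ (∀ A B : Finset (Fin N), h (A ∩ B) + h (A ∪ B) ≤ h A + h B) ∧
    (∀ W K : Finset (Fin N), W ⊆ K → h W ≤ h K) ∧ (∀ W : Finset (Fin N), 0 ≤ h W)}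

/-- `L` is a p-representable semimatroid on `N` variables. -/
def pRepresentable {N : ℕ} (L : Set (Fin N × Fin N × Finset (Fin N))) : Prop :=
  ∃ (M : Fin N → ℕ) (p : (∀ i, Fin (M i)) → ℝ),
    (∀ x, 0 ≤ p x) ∧ (∑ x, p x = 1) ∧
    L = {c | c.1 ∉ c.2.2 ∧ c.2.1 ∉ c.2.2 ∧ condMI p c.1 c.2.1 c.2.2 = 0}

namespace Stmt8Aux

variable {N : ℕ} {M : Fin N → ℕ} (p : (∀ i, Fin (M i)) → ℝ)

/-- restriction of a full configuration to coordinates in `A` -/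
def res (A : Finset (Fin N)) (x : ∀ i, Fin (M i)) : ∀ i : {j // j ∈ A}, Fin (M i.1) :=
  fun i => x i.1

/-- the fiber of configurations agreeing with `x` on `A` -/
def fib (A : Finset (Fin N)) (x : ∀ i, Fin (M i)) : Finset (∀ i, Fin (M i)) :=
  Finset.univ.filter (fun x' => res A x' = res A x)

/-- marginal evaluated along a full configuration -/
noncomputable def mrg (A : Finset (Fin N)) (x : ∀ i, Fin (M i)) : ℝ :=
  marg p A (res A x)

lemma mem_fib_iff {A : Finset (Fin N)} {x x' : ∀ i, Fin (M i)} :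
    x' ∈ fib A x ↔ ∀ i ∈ A, x' i = x i := by
  simp only [fib, mem_filter, mem_univ, true_and, res, funext_iff]
  constructor
  · intro h i hi; exact h ⟨i, hi⟩
  · intro h i; exact h i.1 i.2

lemma mrg_eq_sum_fib (A : Finset (Fin N)) (x : ∀ i, Fin (M i)) :
    mrg p A x = ∑ x' ∈ fib A x, p x' := by
  unfold mrg marg fib
  apply Finset.sum_congr _ (fun _ _ => rfl)
  apply Finset.filter_congr
  intro x' _
  simp [res, funext_iff]

variable (hp : ∀ x, 0 ≤ p x)
include hp

lemma mrg_nonneg (A : Finset (Fin N)) (x : ∀ i, Fin (M i)) : 0 ≤ mrg p A x := by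
  rw [mrg_eq_sum_fib]; exact Finset.sum_nonneg fun x' _ => hp x'

lemma self_mem_fib (A : Finset (Fin N)) (x : ∀ i, Fin (M i)) : x ∈ fib A x := by
  rw [mem_fib_iff]; intro i _; rfl

lemma le_mrg (A : Finset (Fin N)) (x : ∀ i, Fin (M i)) : p x ≤ mrg p A x := by
  rw [mrg_eq_sum_fib]
  exact Finset.single_le_sum (fun x' _ => hp x') (self_mem_fib p hp A x)

omit hp

lemma fib_anti {A B : Finset (Fin N)} (hAB : A ⊆ B) (x : ∀ i, Fin (M i)) :
    fib B x ⊆ fib A x := by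
  intro x' hx'
  rw [mem_fib_iff] at hx' ⊢
  exact fun i hi => hx' i (hAB hi)

include hp
lemma mrg_anti {A B : Finset (Fin N)} (hAB : A ⊆ B) (x : ∀ i, Fin (M i)) :
    mrg p B x ≤ mrg p A x := by
  rw [mrg_eq_sum_fib, mrg_eq_sum_fib]
  exact Finset.sum_le_sum_of_subset_of_nonneg (fib_anti hAB x) (fun x' _ _ => hp x')
omit hp

/-- entropy as a sum over the full configuration space -/
lemma entH_eq_sum (A : Finset (Fin N)) :
    entH p A = -∑ x, p x * Real.logb 2 (mrg p A x) := by
  unfold entH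
  congr 1
  rw [← Finset.sum_fiberwise Finset.univ (res A (M := M)) (fun x => p x * Real.logb 2 (mrg p A x))]
  apply Finset.sum_congr rfl
  intro y _
  have h1 : ∀ x ∈ Finset.univ.filter (fun x => res A x = y), p x * Real.logb 2 (mrg p A x)
      = p x * Real.logb 2 (marg p A y) := by
    intro x hx
    simp only [mem_filter] at hx
    rw [mrg, hx.2]
  rw [Finset.sum_congr rfl h1, ← Finset.sum_mul]
  congr 1
  unfold marg
  apply Finset.sum_congr _ (fun _ _ => rfl)
  apply Finset.filter_congr
  intro x' _
  simp [res, funext_iff]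

/-- conditional entropy as a sum -/
lemma condII_eq_sum (i : Fin N) (K : Finset (Fin N)) :
    condMI p i i K = ∑ x, p x * (Real.logb 2 (mrg p K x) - Real.logb 2 (mrg p (insert i K) x)) := by
  unfold condMI
  rw [Finset.insert_idem]
  have h1 := entH_eq_sum p (insert i K)
  have h2 := entH_eq_sum p K
  simp only [mul_sub]
  rw [Finset.sum_sub_distrib, h1, h2]
  ring

include hp

lemma condII_term_nonneg (i : Fin N) (K : Finset (Fin N)) (x : ∀ i, Fin (M i)) :
    0 ≤ p x * (Real.logb 2 (mrg p K x) - Real.logb 2 (mrg p (insert i K) x)) := by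
  rcases eq_or_lt_of_le (hp x) with h | h
  · rw [← h]; simp
  · apply mul_nonneg (le_of_lt h)
    have h1 : (0:ℝ) < mrg p (insert i K) x := lt_of_lt_of_le h (le_mrg p hp _ x)
    have h2 : mrg p (insert i K) x ≤ mrg p K x := mrg_anti p hp (Finset.subset_insert i K) x
    have := Real.logb_le_logb_of_le (b := 2) (by norm_num) h1 h2
    linarith

lemma condII_nonneg (i : Fin N) (K : Finset (Fin N)) : 0 ≤ condMI p i i K := by
  rw [condII_eq_sum]
  exact Finset.sum_nonneg fun x _ => condII_term_nonneg p hp i K x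

lemma condII_zero_iff (i : Fin N) (K : Finset (Fin N)) :
    condMI p i i K = 0 ↔ ∀ x, 0 < p x → mrg p K x = mrg p (insert i K) x := by
  rw [condII_eq_sum]
  rw [Finset.sum_eq_zero_iff_of_nonneg (fun x _ => condII_term_nonneg p hp i K x)]
  constructor
  · intro h x hx
    have := h x (Finset.mem_univ x)
    have h0 : Real.logb 2 (mrg p K x) - Real.logb 2 (mrg p (insert i K) x) = 0 := by
      rcases mul_eq_zero.1 this with h' | h'
      · exact absurd h' (ne_of_gt hx)
      · exact h'
    by_contra hne
    have h1 : (0:ℝ) < mrg p (insert i K) x := lt_of_lt_of_le hx (le_mrg p hp _ x)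
    have h2 : mrg p (insert i K) x ≤ mrg p K x := mrg_anti p hp (Finset.subset_insert i K) x
    have h3 : mrg p (insert i K) x < mrg p K x := lt_of_le_of_ne h2 (fun h => hne h.symm)
    have := Real.logb_lt_logb (b := 2) (by norm_num) h1 h3
    linarith
  · intro h x _
    rcases eq_or_lt_of_le (hp x) with h' | h'
    · rw [← h']; ring
    · rw [h x h']; ring

/-- key: a zero conditional entropy stays zero when enlarging the conditioning set -/
lemma condII_mono_zero {i : Fin N} {K K' : Finset (Fin N)} (hKK : K ⊆ K')
    (h : condMI p i i K = 0) : condMI p i i K' = 0 := by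
  rw [condII_zero_iff p hp] at h ⊢
  intro x hx
  -- claim: for x' ∈ supp with x' ≡_K x we have x' i = x i
  have key : ∀ x', 0 < p x' → x' ∈ fib K x → x' i = x i := by
    intro x' hx' hfib
    by_contra hne
    -- fib (insert i K) x and fib (insert i K) x' are disjoint subsets of fib K x
    have hd : Disjoint (fib (M := M) (insert i K) x) (fib (insert i K) x') := by
      rw [Finset.disjoint_left]
      intro a ha ha'
      rw [mem_fib_iff] at ha ha'
      exact hne ((ha' i (Finset.mem_insert_self i K)).symm.trans (ha i (Finset.mem_insert_self i K)))
    have hsub : fib (insert i K) x ∪ fib (insert i K) x' ⊆ fib K x := by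
      apply Finset.union_subset
      · exact fib_anti (Finset.subset_insert i K) x
      · intro a ha
        rw [mem_fib_iff] at ha ⊢
        intro m hm
        rw [ha m (Finset.mem_insert_of_mem hm)]
        exact (mem_fib_iff.1 hfib) m hm
    have hsum : mrg p (insert i K) x + mrg p (insert i K) x' ≤ mrg p K x := by
      rw [mrg_eq_sum_fib, mrg_eq_sum_fib, mrg_eq_sum_fib, ← Finset.sum_union hd]
      exact Finset.sum_le_sum_of_subset_of_nonneg hsub (fun a _ _ => hp a)
    have h0 := h x hx
    have h1 : (0:ℝ) < mrg p (insert i K) x' := lt_of_lt_of_le hx' (le_mrg p hp _ x')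
    linarith
  rw [mrg_eq_sum_fib, mrg_eq_sum_fib]
  symm
  apply Finset.sum_subset (fib_anti (Finset.subset_insert i K') x)
  intro a ha hna
  by_contra hpa
  have hpa' : 0 < p a := lt_of_le_of_ne (hp a) (fun h => hpa h.symm)
  have hai : a i = x i := key a hpa' (fib_anti hKK x ha)
  apply hna
  rw [mem_fib_iff] at ha ⊢
  intro m hm
  rcases Finset.mem_insert.1 hm with h | h
  · rw [h]; exact hai
  · exact ha m h

end Stmt8Aux

namespace Stmt8Aux2
variable {N : ℕ} {M : Fin N → ℕ} (p : (∀ i, Fin (M i)) → ℝ)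

lemma condMI_symm (i j : Fin N) (K : Finset (Fin N)) : condMI p i j K = condMI p j i K := by
  unfold condMI
  rw [Finset.insert_comm]
  ring

lemma condMI_chain (i j : Fin N) (K : Finset (Fin N)) :
    condMI p i i K = condMI p i j K + condMI p i i (insert j K) := by
  unfold condMI
  simp only [Finset.insert_idem]
  ring

end Stmt8Aux2


namespace Stmt8Comb

abbrev Bd := List (Finset (Fin 4) × ℕ)

def bsem (d : Bd) (A : Finset (Fin 4)) : ℕ :=
  (d.map (fun ut => min ((A ∩ ut.1).card) ut.2)).sum

def eZm (d : Bd) (a b : Fin 4) (K : Finset (Fin 4)) : Prop :=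
  bsem d (insert a K) + bsem d (insert b K) = bsem d K + bsem d (insert a (insert b K))

instance (d : Bd) (a b : Fin 4) (K : Finset (Fin 4)) : Decidable (eZm d a b K) := by
  unfold eZm; infer_instance

def GammaN (d : Bd) : Prop :=
  bsem d ∅ = 0 ∧ (∀ A B : Finset (Fin 4), bsem d (A ∩ B) + bsem d (A ∪ B) ≤ bsem d A + bsem d B)
    ∧ (∀ A B : Finset (Fin 4), A ⊆ B → bsem d A ≤ bsem d B)

def IngN (d : Bd) : Prop :=
  ∀ i j k l : Fin 4, ({i, j, k, l} : Finset (Fin 4)) = Finset.univ →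
    bsem d {i, j} + bsem d {k} + bsem d {l} + bsem d {i, k, l} + bsem d {j, k, l}
      ≤ bsem d {i, k} + bsem d {i, l} + bsem d {j, k} + bsem d {j, l} + bsem d {k, l}

instance (d : Bd) : Decidable (GammaN d) := by unfold GammaN; infer_instance
instance (d : Bd) : Decidable (IngN d) := by unfold IngN; infer_instance

def allSubsets : List (Finset (Fin 4)) :=
  (List.range 16).map (fun n => Finset.univ.filter (fun i : Fin 4 => n.testBit i.val))

def lib : List Bd :=
  (allSubsets.map fun U => [(U, 1)])
  ++ [[((Finset.univ : Finset (Fin 4)), 3)]]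
  ++ (([0, 1, 2, 3] : List (Fin 4)).map fun y => [(Finset.univ \ {y}, 2), ({y}, 1)])
  ++ ((allSubsets.filter fun U => U.card = 2).map fun U => [(U, 1), (Finset.univ \ U, 2)])

def pickElt (s : Finset (Fin 4)) : Fin 4 := s.min.getD 0

def pick2 (S : Finset (Fin 4)) (i : Fin 4) (K : Finset (Fin 4)) : Bd :=
  if 3 ≤ S.card then [((Finset.univ : Finset (Fin 4)), 3)]
  else if S.card = 1 then
    let x := pickElt (Finset.univ \ insert i K)
    [({i, x}, 1), (Finset.univ \ {i, x}, 2)]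
  else
    let s := pickElt (S \ {i})
    let yz := (Finset.univ : Finset (Fin 4)) \ {i, s}
    let x := if (yz \ K).Nonempty then pickElt (yz \ K) else pickElt yz
    [(Finset.univ \ ({i, s, x} : Finset (Fin 4))ᶜ, 2), (({i, s, x} : Finset (Fin 4))ᶜ, 1)]

def pick4 (Q : Finset (Fin 4)) (i j : Fin 4) (K : Finset (Fin 4)) : Bd :=
  if Q = Finset.univ then
    let z := pickElt ((Finset.univ \ {i, j}) \ K)
    [({i, j, z}, 1)]
  else if Q.card = 3 then
    if (Q \ {i, j}) ⊆ K then
      let l := pickElt (Finset.univ \ Q)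
      [(Finset.univ \ ({i, j, l} : Finset (Fin 4))ᶜ, 2), (({i, j, l} : Finset (Fin 4))ᶜ, 1)]
    else [(Q, 1)]
  else
    let z := pickElt K
    [(Finset.univ \ ({i, j, z} : Finset (Fin 4))ᶜ, 2), (({i, j, z} : Finset (Fin 4))ᶜ, 1)]

-- decidable statements, tested via #eval first
def dLib : Prop := ∀ d ∈ lib, GammaN d ∧ IngN d
def dMem1 : Prop := ∀ U : Finset (Fin 4), [(U, 1)] ∈ lib
def dB1 : Prop := ∀ i : Fin 4,
  (∀ a b : Fin 4, ∀ K' : Finset (Fin 4), a ≠ b → eZm [({i}, 1)] a b K')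
  ∧ (∀ s : Fin 4, ∀ K' : Finset (Fin 4), s ≠ i → eZm [({i}, 1)] s s K')
  ∧ (∀ K' : Finset (Fin 4), i ∉ K' → ¬ eZm [({i}, 1)] i i K')
def dB3 : Prop := ∀ i j : Fin 4, i ≠ j →
  (∀ a b : Fin 4, ∀ Q : Finset (Fin 4), a ≠ b → ¬(a = i ∧ b = j) → ¬(a = j ∧ b = i) →
    eZm [({i, j}, 1)] a b (Q \ {a, b}))
  ∧ (∀ s : Fin 4, eZm [({i, j}, 1)] s s (Finset.univ \ {s}))
  ∧ (∀ K' : Finset (Fin 4), i ∉ K' → j ∉ K' → ¬ eZm [({i, j}, 1)] i j K')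
def dB2 : Prop := ∀ (S : Finset (Fin 4)) (i : Fin 4) (K : Finset (Fin 4)),
  i ∈ S → i ∉ K → K ≠ Finset.univ \ {i} →
    pick2 S i K ∈ lib
    ∧ (∀ a b : Fin 4, a ≠ b → a ∉ S → b ∉ S → eZm (pick2 S i K) a b (Finset.univ \ {a, b}))
    ∧ (∀ s ∈ S, eZm (pick2 S i K) s s (Finset.univ \ {s}))
    ∧ ¬ eZm (pick2 S i K) i i K
def dB4 : Prop := ∀ (Q : Finset (Fin 4)) (i j : Fin 4) (K : Finset (Fin 4)),
  i ≠ j → i ∈ Q → j ∈ Q → i ∉ K → j ∉ K → K ≠ Q \ {i, j} →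
    pick4 Q i j K ∈ lib
    ∧ (∀ a b : Fin 4, a ≠ b → a ∈ Q → b ∈ Q → eZm (pick4 Q i j K) a b (Q \ {a, b}))
    ∧ (Q = Finset.univ → ∀ s : Fin 4, eZm (pick4 Q i j K) s s (Finset.univ \ {s}))
    ∧ ¬ eZm (pick4 Q i j K) i j K

instance : Decidable dLib := by unfold dLib; infer_instance
instance : Decidable dMem1 := by unfold dMem1; infer_instance
instance : Decidable dB1 := by unfold dB1; infer_instance
instance : Decidable dB3 := by unfold dB3; infer_instance
instance : Decidable dB2 := by unfold dB2; infer_instance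
instance : Decidable dB4 := by unfold dB4; infer_instance

lemma lLib : dLib := by decide
lemma lMem1 : dMem1 := by decide
lemma lB1 : dB1 := by decide
lemma lB3 : dB3 := by decide
lemma lB2 : dB2 := by decide
lemma lB4 : dB4 := by decide

end Stmt8Comb

namespace Stmt8Main
open Stmt8Aux Stmt8Aux2 Stmt8Comb

lemma fIns : ∀ (i j : Fin 4) (K : Finset (Fin 4)), i ≠ j → i ∉ K → j ∉ K →
    insert i K ∩ insert j K = K ∧ insert i K ∪ insert j K = insert i (insert j K) := by decide

lemma fShape : ∀ (i j : Fin 4) (K Q : Finset (Fin 4)), i ∉ K → j ∉ K → insert i (insert j K) = Q →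
    i ∈ Q ∧ j ∈ Q ∧ ((i = j ∧ K = Q \ {i}) ∨ (i ≠ j ∧ K = Q \ {i, j})) := by decide

lemma fMisc : ∀ (s b : Fin 4), s ≠ b →
    insert b (Finset.univ \ {s, b}) = Finset.univ \ {s}
    ∧ insert s (insert s (Finset.univ \ {s, b})) = Finset.univ \ {b}
    ∧ Finset.univ \ {b} ≠ Finset.univ
    ∧ s ∉ (Finset.univ : Finset (Fin 4)) \ {s, b} := by decide

lemma fPair : ∀ (a b : Fin 4), ({a, b} : Finset (Fin 4)) = {b, a} := by decide

lemma gamma_expr_le {d : Bd} (hg : GammaN d) {i j : Fin 4} {K : Finset (Fin 4)}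
    (hi : i ∉ K) (hj : j ∉ K) :
    bsem d K + bsem d (insert i (insert j K)) ≤ bsem d (insert i K) + bsem d (insert j K) := by
  by_cases hij : i = j
  · subst hij
    rw [Finset.insert_idem]
    exact Nat.add_le_add_right (hg.2.2 _ _ (Finset.subset_insert i K)) _
  · obtain ⟨h1, h2⟩ := fIns i j K hij hi hj
    have := hg.2.1 (insert i K) (insert j K)
    rw [h1, h2] at this
    omega

end Stmt8Main


open Stmt8Main Stmt8Aux Stmt8Aux2 Stmt8Comb

set_option maxHeartbeats 1000000 in
set_option maxRecDepth 10000 in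
/-- A p-representable semimatroid on four variables with at least two couples, all of whose
couples `(i,j|K)` have `{i} ∪ {j} ∪ K` equal to a fixed subset `N'`, is an Ingleton
semimatroid: it arises from a polymatroid in `Γ_4` satisfying all six Ingleton
inequalities. -/
theorem stmt8 (L : Set (Fin 4 × Fin 4 × Finset (Fin 4)))
    (hrep : pRepresentable L) (htwo : L.Nontrivial)
    (N' : Finset (Fin 4)) (hN' : ∀ c ∈ L, insert c.1 (insert c.2.1 c.2.2) = N') :
    ∃ f : Finset (Fin 4) → ℝ, f ∈ Gamma 4 ∧
      (∀ i j k l : Fin 4, ({i, j, k, l} : Finset (Fin 4)) = Finset.univ →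
        0 ≤ f {i, k} + f {i, l} + f {j, k} + f {j, l} + f {k, l} -
          f {i, j} - f {k} - f {l} - f {i, k, l} - f {j, k, l}) ∧
      L = {c | c.1 ∉ c.2.2 ∧ c.2.1 ∉ c.2.2 ∧
        f (insert c.1 c.2.2) + f (insert c.2.1 c.2.2) - f c.2.2 -
          f (insert c.1 (insert c.2.1 c.2.2)) = 0} := by
  classical
  obtain ⟨M, p, hp, hsum, hL⟩ := hrep
  have hmem : ∀ c : Fin 4 × Fin 4 × Finset (Fin 4), c ∈ L ↔
      (c.1 ∉ c.2.2 ∧ c.2.1 ∉ c.2.2 ∧ condMI p c.1 c.2.1 c.2.2 = 0) := by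
    intro c; rw [hL]; rfl
  have hshape : ∀ c ∈ L, c.1 ∈ N' ∧ c.2.1 ∈ N' ∧
      ((c.1 = c.2.1 ∧ c.2.2 = N' \ {c.1}) ∨ (c.1 ≠ c.2.1 ∧ c.2.2 = N' \ {c.1, c.2.1})) := by
    intro c hc
    obtain ⟨hi, hj, -⟩ := (hmem c).1 hc
    exact fShape c.1 c.2.1 c.2.2 N' hi hj (hN' c hc)
  -- F1 : a loop in L forces N' = univ
  have hF1 : ∀ s : Fin 4, (s, s, N' \ {s}) ∈ L → N' = Finset.univ := by
    intro s hs
    by_contra hne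
    have hex : ∃ m, m ∉ N' := by
      by_contra h; push_neg at h; exact hne (Finset.eq_univ_iff_forall.2 h)
    obtain ⟨m, hm⟩ := hex
    have h0 := (hmem _).1 hs
    have hcz : condMI p s s (insert m (N' \ {s})) = 0 :=
      condII_mono_zero p hp (Finset.subset_insert m _) h0.2.2
    have hsN : s ∈ N' := (hshape _ hs).1
    have hsm : s ≠ m := fun h => hm (h ▸ hsN)
    have hsK : s ∉ insert m (N' \ {s}) := by
      simp [Finset.mem_insert, hsm]
    have hcL : (s, s, insert m (N' \ {s})) ∈ L := (hmem _).2 ⟨hsK, hsK, hcz⟩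
    have hu := hN' _ hcL
    apply hm
    rw [← hu]
    simp
  -- symmetry
  have hsymm : ∀ (a b : Fin 4) (K : Finset (Fin 4)), (a, b, K) ∈ L → (b, a, K) ∈ L := by
    intro a b K h
    obtain ⟨h1, h2, h3⟩ := (hmem _).1 h
    exact (hmem _).2 ⟨h2, h1, (condMI_symm p b a K).trans h3⟩
  -- F2 : loops avoid pairs
  have hF2 : ∀ s b : Fin 4, s ≠ b → (s, s, N' \ {s}) ∈ L → (s, b, N' \ {s, b}) ∈ L → False := by
    intro s b hsb hs hb
    have hQ := hF1 s hs
    subst hQ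
    obtain ⟨hm1, hm2, hm3, hm4⟩ := fMisc s b hsb
    have hchain := condMI_chain p s b (Finset.univ \ {s, b})
    rw [hm1] at hchain
    have hz : condMI p s s (Finset.univ \ {s, b}) = 0 := by
      rw [hchain, ((hmem _).1 hb).2.2, ((hmem _).1 hs).2.2]; ring
    have hcL : (s, s, Finset.univ \ {s, b}) ∈ L := (hmem _).2 ⟨hm4, hm4, hz⟩
    have hu := hN' _ hcL
    simp only at hu
    rw [hm2] at hu
    exact hm3 hu
  -- master: blocks for every non-member couple
  have master : ∀ c : Fin 4 × Fin 4 × Finset (Fin 4), c ∉ L →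
      ∃ d : Bd, GammaN d ∧ IngN d ∧ (∀ c' ∈ L, eZm d c'.1 c'.2.1 c'.2.2)
        ∧ (c.1 ∉ c.2.2 → c.2.1 ∉ c.2.2 → ¬ eZm d c.1 c.2.1 c.2.2) := by
    rintro ⟨i, j, K⟩ hc
    by_cases hK : i ∉ K ∧ j ∉ K
    swap
    · refine ⟨[], by decide, by decide, fun c' _ => rfl, fun h1 h2 => absurd ⟨h1, h2⟩ hK⟩
    obtain ⟨hiK, hjK⟩ := hK
    by_cases hij : i = j
    · subst hij
      by_cases hS : (i, i, N' \ {i}) ∈ L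
      · -- i is a loop of L
        have hQ := hF1 i hS
        subst hQ
        set Sf : Finset (Fin 4) :=
          Finset.univ.filter (fun s => (s, s, Finset.univ \ {s}) ∈ L) with hSf
        have hiS : i ∈ Sf := by
          rw [hSf, Finset.mem_filter]; exact ⟨Finset.mem_univ i, hS⟩
        have hKne : K ≠ Finset.univ \ {i} := fun h => hc (by rw [h]; exact hS)
        obtain ⟨hmem2, hpair2, hloop2, htgt2⟩ := lB2 Sf i K hiS hiK hKne
        obtain ⟨hg, hing⟩ := lLib _ hmem2
        refine ⟨pick2 Sf i K, hg, hing, ?_, fun _ _ => htgt2⟩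
        rintro ⟨a, b, Kc⟩ hc'
        obtain ⟨haN, hbN, hsh⟩ := hshape _ hc'
        simp only at haN hbN hsh ⊢
        rcases hsh with ⟨heq, hKeq⟩ | ⟨hne, hKeq⟩
        · subst heq; subst hKeq
          exact hloop2 a (by rw [hSf, Finset.mem_filter]; exact ⟨Finset.mem_univ a, hc'⟩)
        · subst hKeq
          refine hpair2 a b hne ?_ ?_
          · intro hmemS
            rw [hSf, Finset.mem_filter] at hmemS
            exact hF2 a b hne hmemS.2 hc'
          · intro hmemS
            rw [hSf, Finset.mem_filter] at hmemS
            exact hF2 b a (Ne.symm hne) hmemS.2 (by rw [fPair b a]; exact hsymm a b _ hc')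
      · -- i is not a loop of L
        obtain ⟨hpair1, hloop1, htgt1⟩ := lB1 i
        obtain ⟨hg, hing⟩ := lLib _ (lMem1 {i})
        refine ⟨_, hg, hing, ?_, fun h1 _ => htgt1 K h1⟩
        rintro ⟨a, b, Kc⟩ hc'
        obtain ⟨haN, hbN, hsh⟩ := hshape _ hc'
        simp only at haN hbN hsh ⊢
        rcases hsh with ⟨heq, hKeq⟩ | ⟨hne, hKeq⟩
        · subst heq
          refine hloop1 a Kc ?_
          intro hai
          subst hai
          subst hKeq
          exact hS hc'
        · exact hpair1 a b Kc hne
    · -- i ≠ j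
      by_cases hP : (i, j, N' \ {i, j}) ∈ L
      · have hiN : i ∈ N' := (hshape _ hP).1
        have hjN : j ∈ N' := (hshape _ hP).2.1
        have hKne : K ≠ N' \ {i, j} := fun h => hc (by rw [h]; exact hP)
        obtain ⟨hmem4, hpair4, hloop4, htgt4⟩ := lB4 N' i j K hij hiN hjN hiK hjK hKne
        obtain ⟨hg, hing⟩ := lLib _ hmem4
        refine ⟨pick4 N' i j K, hg, hing, ?_, fun _ _ => htgt4⟩
        rintro ⟨a, b, Kc⟩ hc'
        obtain ⟨haN, hbN, hsh⟩ := hshape _ hc'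
        simp only at haN hbN hsh ⊢
        rcases hsh with ⟨heq, hKeq⟩ | ⟨hne, hKeq⟩
        · subst heq
          have hQ := hF1 a (by rw [← hKeq]; exact hc')
          rw [hQ] at hKeq
          subst hKeq
          exact hloop4 hQ a
        · subst hKeq
          exact hpair4 a b hne haN hbN
      · obtain ⟨hpair3, hloop3, htgt3⟩ := lB3 i j hij
        obtain ⟨hg, hing⟩ := lLib _ (lMem1 {i, j})
        refine ⟨_, hg, hing, ?_, fun h1 h2 => htgt3 K h1 h2⟩
        rintro ⟨a, b, Kc⟩ hc'
        obtain ⟨haN, hbN, hsh⟩ := hshape _ hc'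
        simp only at haN hbN hsh ⊢
        rcases hsh with ⟨heq, hKeq⟩ | ⟨hne, hKeq⟩
        · subst heq
          have hQ := hF1 a (by rw [← hKeq]; exact hc')
          rw [hQ] at hKeq
          subst hKeq
          exact hloop3 a
        · subst hKeq
          refine hpair3 a b N' hne ?_ ?_
          · intro hab
            rw [hab.1, hab.2] at hc'
            exact hP hc'
          · intro hab
            rw [hab.1, hab.2] at hc'
            have hsy := hsymm j i _ hc'
            rw [fPair j i] at hsy
            exact hP hsy
  -- assemble f
  choose gfun hgGamma hgIng hgVanish hgTarget using master
  have ggdef : ∀ c : Fin 4 × Fin 4 × Finset (Fin 4), ∃ d : Bd,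
      GammaN d ∧ IngN d ∧ (∀ c' ∈ L, eZm d c'.1 c'.2.1 c'.2.2)
        ∧ (c ∉ L → c.1 ∉ c.2.2 → c.2.1 ∉ c.2.2 → ¬ eZm d c.1 c.2.1 c.2.2) := by
    intro c
    by_cases hc : c ∈ L
    · exact ⟨[], by decide, by decide, fun c' _ => rfl, fun h => absurd hc h⟩
    · exact ⟨gfun c hc, hgGamma c hc, hgIng c hc, hgVanish c hc,
        fun _ => hgTarget c hc⟩
  choose gg ggGamma ggIng ggVanish ggTarget using ggdef
  obtain ⟨F, hF⟩ : ∃ F : Finset (Fin 4) → ℕ,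
      ∀ A, F A = ∑ c : Fin 4 × Fin 4 × Finset (Fin 4), bsem (gg c) A :=
    ⟨_, fun A => rfl⟩
  refine ⟨fun A => (F A : ℝ), ⟨?_, ?_, ?_, ?_⟩, ?_, ?_⟩
  · -- f ∅ = 0
    beta_reduce
    have : F ∅ = 0 := by
      rw [hF]; exact Finset.sum_eq_zero fun c _ => (ggGamma c).1
    rw [this]; norm_num
  · -- submodular
    beta_reduce
    intro A B
    have h : F (A ∩ B) + F (A ∪ B) ≤ F A + F B := by
      rw [hF, hF, hF, hF, ← Finset.sum_add_distrib, ← Finset.sum_add_distrib]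
      exact Finset.sum_le_sum fun c _ => (ggGamma c).2.1 A B
    exact_mod_cast h
  · -- monotone
    beta_reduce
    intro W K hWK
    have h : F W ≤ F K := by
      rw [hF, hF]
      exact Finset.sum_le_sum fun c _ => (ggGamma c).2.2 W K hWK
    exact_mod_cast h
  · -- nonneg
    beta_reduce
    intro W
    positivity
  · -- Ingleton
    beta_reduce
    intro i j k l huniv
    have h : F {i, j} + F {k} + F {l} + F {i, k, l} + F {j, k, l}
        ≤ F {i, k} + F {i, l} + F {j, k} + F {j, l} + F {k, l} := by
      simp only [hF]
      rw [← Finset.sum_add_distrib, ← Finset.sum_add_distrib, ← Finset.sum_add_distrib,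
        ← Finset.sum_add_distrib, ← Finset.sum_add_distrib, ← Finset.sum_add_distrib,
        ← Finset.sum_add_distrib, ← Finset.sum_add_distrib]
      exact Finset.sum_le_sum fun c _ => ggIng c i j k l huniv
    have hcast : ((F {i, j} : ℝ) + F {k} + F {l} + F {i, k, l} + F {j, k, l})
        ≤ ((F {i, k} : ℝ) + F {i, l} + F {j, k} + F {j, l} + F {k, l}) := by
      exact_mod_cast h
    linarith
  · -- zero-set equality
    beta_reduce
    ext c
    obtain ⟨i, j, K⟩ := c
    simp only [Set.mem_setOf_eq]
    constructor
    · intro hcL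
      obtain ⟨h1, h2, -⟩ := (hmem _).1 hcL
      refine ⟨h1, h2, ?_⟩
      have hFeq : F (insert i K) + F (insert j K) = F K + F (insert i (insert j K)) := by
        rw [hF, hF, hF, hF, ← Finset.sum_add_distrib, ← Finset.sum_add_distrib]
        exact Finset.sum_congr rfl fun c' _ => ggVanish c' _ hcL
      have hcast : ((F (insert i K) : ℝ) + F (insert j K))
          = ((F K : ℝ) + F (insert i (insert j K))) := by exact_mod_cast hFeq
      linarith
    · rintro ⟨h1, h2, h3⟩
      by_contra hcL
      have hlt : F K + F (insert i (insert j K)) < F (insert i K) + F (insert j K) := by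
        rw [hF, hF, hF, hF, ← Finset.sum_add_distrib, ← Finset.sum_add_distrib]
        refine Finset.sum_lt_sum (fun c' _ => gamma_expr_le (ggGamma c') h1 h2) ?_
        refine ⟨(i, j, K), Finset.mem_univ _, ?_⟩
        have hne := ggTarget (i, j, K) hcL h1 h2
        simp only [eZm] at hne
        have hle := gamma_expr_le (ggGamma (i, j, K)) h1 h2
        omega
      have hcast : ((F K : ℝ) + F (insert i (insert j K)))
          < ((F (insert i K) : ℝ) + F (insert j K)) := by exact_mod_cast hlt
      linarith
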